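/- Let μ be a directed distance on a nonempty finite set S. Then for each s ∈ S, the points μ_s^{in} and μ_s^{out} belong to T_{μ,s}, and for every p ∈ T_μ and s ∈ S: p^c(s) = D_∞(T_{μ,s}, {p}) = D_∞(μ_s^{out}, p) and p^r(s) = D_∞({p}, T_{μ,s}) = D_∞(p, μ_s^{in}). -/
import Mathlib


open scoped BigOperators

/-- Points of `ℝ^{S^{cr}}`: pairs `p = (p^c, p^r)` of functions `S → ℝ`,
with the componentwise partial order (the product/pi order). -/
abbrev Pt (S : Type*) := (S → ℝ) × (S → ℝ)

/-- `μ` is a directed distance: nonnegative with zero diagonal. -/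
def DirDist {S : Type*} (μ : S → S → ℝ) : Prop :=
  (∀ s t, 0 ≤ μ s t) ∧ (∀ s, μ s s = 0)

/-- `d` is a directed metric: a directed distance satisfying the triangle inequality. -/
def DirMetric {V : Type*} (d : V → V → ℝ) : Prop :=
  DirDist d ∧ ∀ x y z, d x z ≤ d x y + d y z

/-- The polyhedron `Π_μ`. -/
def PiP {S : Type*} (μ : S → S → ℝ) : Set (Pt S) :=
  {p | ∀ s t, μ s t ≤ p.1 s + p.2 t}

/-- The polyhedron `P_μ = Π_μ ∩ ℝ_+^{S^{cr}}`. -/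
def PP {S : Type*} (μ : S → S → ℝ) : Set (Pt S) :=
  {p ∈ PiP μ | 0 ≤ p}

/-- The directed tight span `T_μ`: minimal elements of `P_μ`. -/
def TT {S : Type*} (μ : S → S → ℝ) : Set (Pt S) :=
  {p ∈ PP μ | ∀ q ∈ PP μ, q ≤ p → q = p}

/-- `Q_μ`: minimal elements of `Π_μ`. -/
def QQ {S : Type*} (μ : S → S → ℝ) : Set (Pt S) :=
  {p ∈ PiP μ | ∀ q ∈ PiP μ, q ≤ p → q = p}

/-- `Q_μ^+ = Q_μ ∩ ℝ_+^{S^{cr}}`. -/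
def QP {S : Type*} (μ : S → S → ℝ) : Set (Pt S) :=
  QQ μ ∩ {p | 0 ≤ p}

/-- `D_∞^+(f,g) = max_x (g(x) - f(x))_+`. -/
noncomputable def Dplus {X : Type*} [Fintype X] (f g : X → ℝ) : ℝ :=
  ⨆ x, max (g x - f x) 0

/-- `D_∞(p,q) = max ( D_∞^+(p^c,q^c), D_∞^+(q^r,p^r) )`. -/
noncomputable def Dinf {S : Type*} [Fintype S] (p q : Pt S) : ℝ :=
  max (Dplus p.1 q.1) (Dplus q.2 p.2)

/-- A subset `R` is balanced if no pair `p, q ∈ R` satisfies `p^c < q^c`,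
and no pair satisfies `p^r < q^r`. -/
def BalancedSet {S : Type*} (R : Set (Pt S)) : Prop :=
  (¬ ∃ p ∈ R, ∃ q ∈ R, ∀ s, p.1 s < q.1 s) ∧
  (¬ ∃ p ∈ R, ∃ q ∈ R, ∀ s, p.2 s < q.2 s)

/-- The vector `e = (1, -1)` spanning the linearity space of `Π_μ`. -/
def eVec (S : Type*) : Pt S := (fun _ => 1, fun _ => -1)

/-- `R ⊆ Q_μ` is a section: every point of `Q_μ` differs from exactly one point
of `R` by a multiple of `e`. -/
def IsSection {S : Type*} (μ : S → S → ℝ) (R : Set (Pt S)) : Prop :=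
  R ⊆ QQ μ ∧ ∀ q ∈ QQ μ, ∃! p, p ∈ R ∧ ∃ α : ℝ, q - p = α • eVec S

/-- The length of the cycle `(x 0, x 1, …, x m)` with respect to `d`. -/
def cycLen {V : Type*} (d : V → V → ℝ) (m : ℕ) (x : Fin (m + 1) → V) : ℝ :=
  ∑ i, d (x i) (x (i + 1))


/-- The "entrance" point `μ_s^{in}`. -/
noncomputable def muIn {S : Type*} [Fintype S] (μ : S → S → ℝ) (s : S) : Pt S :=
  (fun t => μ t s, fun t => ⨆ u, (μ u t - μ u s))

/-- The "exit" point `μ_s^{out}`. -/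
noncomputable def muOut {S : Type*} [Fintype S] (μ : S → S → ℝ) (s : S) : Pt S :=
  (fun t => ⨆ u, (μ t u - μ s u), fun t => μ s t)

/-- Minimum `D_∞`-distance from `A` to `B`. -/
noncomputable def DinfSet {S : Type*} [Fintype S] (A B : Set (Pt S)) : ℝ :=
  sInf (Set.image2 Dinf A B)

/-- `T_{μ,s}`. -/
def Tms {S : Type*} (μ : S → S → ℝ) (s : S) : Set (Pt S) :=
  {p ∈ TT μ | p.1 s = 0 ∧ p.2 s = 0}

section Helpers

variable {S : Type*} [Fintype S] [Nonempty S]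

private lemma le_sup' (f : S → ℝ) (u : S) : f u ≤ ⨆ x, f x :=
  le_ciSup (Set.Finite.bddAbove (Set.finite_range f)) u

private lemma exists_sup_eq (f : S → ℝ) : ∃ u, (⨆ x, f x) = f u := by
  obtain ⟨u, hu⟩ := Finite.exists_max f
  exact ⟨u, le_antisymm (ciSup_le hu) (le_sup' f u)⟩

private lemma mem_PP {μ : S → S → ℝ} {p : Pt S} :
    p ∈ PP μ ↔ (∀ a b, μ a b ≤ p.1 a + p.2 b) ∧ (∀ t, 0 ≤ p.1 t) ∧ (∀ t, 0 ≤ p.2 t) := by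
  simp [PP, PiP, Prod.le_def, Pi.le_def, Set.mem_setOf_eq]

private lemma le_Dplus (f g : S → ℝ) (x : S) : g x - f x ≤ Dplus f g :=
  le_trans (le_max_left _ _) (le_sup' (fun x => max (g x - f x) 0) x)

private lemma Dplus_le {f g : S → ℝ} {a : ℝ} (ha : 0 ≤ a) (h : ∀ x, g x - f x ≤ a) :
    Dplus f g ≤ a := ciSup_le fun x => max_le (h x) ha

private lemma le_Dinf_c {p q : Pt S} (t : S) : q.1 t - p.1 t ≤ Dinf p q :=
  le_trans (le_Dplus _ _ t) (le_max_left _ _)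

private lemma le_Dinf_r {p q : Pt S} (t : S) : p.2 t - q.2 t ≤ Dinf p q :=
  le_trans (le_Dplus _ _ t) (le_max_right _ _)

private lemma Dinf_le {p q : Pt S} {a : ℝ} (ha : 0 ≤ a)
    (h1 : ∀ t, q.1 t - p.1 t ≤ a) (h2 : ∀ t, p.2 t - q.2 t ≤ a) : Dinf p q ≤ a :=
  max_le (Dplus_le ha h1) (Dplus_le ha h2)

private lemma muOut_fst_self (μ : S → S → ℝ) (s : S) : (muOut μ s).1 s = 0 := by
  simp [muOut, sub_self, ciSup_const]

private lemma muIn_snd_self (μ : S → S → ℝ) (s : S) : (muIn μ s).2 s = 0 := by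
  simp [muIn, sub_self, ciSup_const]

private lemma muIn_mem_Tms {μ : S → S → ℝ} (hμ : DirDist μ) (s : S) :
    muIn μ s ∈ Tms μ s := by
  have hPP : muIn μ s ∈ PP μ := by
    rw [mem_PP]
    refine ⟨fun a b => ?_, fun t => hμ.1 t s, fun t => ?_⟩
    · have := le_sup' (fun u => μ u b - μ u s) a
      simp only [muIn]
      try dsimp at this ⊢
      linarith
    · have h := le_sup' (fun u => μ u t - μ u s) s
      have := hμ.2 s
      have := hμ.1 s t
      simp only [muIn]
      try dsimp at h ⊢
      linarith
  refine ⟨⟨hPP, ?_⟩, by simp [muIn, hμ.2 s], muIn_snd_self μ s⟩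
  intro q hq hle
  rw [mem_PP] at hq
  have h2 : q.2 = (muIn μ s).2 := by
    funext t
    apply le_antisymm (hle.2 t)
    apply ciSup_le
    intro u
    have h1 := hq.1 u t
    have h2 := hle.1 u
    simp only [muIn] at h2 ⊢
    try dsimp at h2 ⊢
    linarith
  have h1 : q.1 = (muIn μ s).1 := by
    funext t
    apply le_antisymm (hle.1 t)
    have hf := hq.1 t s
    have hqs : q.2 s ≤ 0 := by
      rw [h2]; rw [muIn_snd_self]
    simp only [muIn]
    try dsimp
    linarith
  exact Prod.ext h1 h2

private lemma muOut_mem_Tms {μ : S → S → ℝ} (hμ : DirDist μ) (s : S) :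
    muOut μ s ∈ Tms μ s := by
  have hPP : muOut μ s ∈ PP μ := by
    rw [mem_PP]
    refine ⟨fun a b => ?_, fun t => ?_, fun t => hμ.1 s t⟩
    · have := le_sup' (fun u => μ a u - μ s u) b
      simp only [muOut]
      try dsimp at this ⊢
      linarith
    · have h := le_sup' (fun u => μ t u - μ s u) s
      have := hμ.2 s
      have := hμ.1 t s
      simp only [muOut]
      try dsimp at h ⊢
      linarith
  refine ⟨⟨hPP, ?_⟩, muOut_fst_self μ s, by simp [muOut, hμ.2 s]⟩
  intro q hq hle
  rw [mem_PP] at hq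
  have h1 : q.1 = (muOut μ s).1 := by
    funext t
    apply le_antisymm (hle.1 t)
    apply ciSup_le
    intro u
    have ha := hq.1 t u
    have hb := hle.2 u
    simp only [muOut] at hb ⊢
    try dsimp at hb ⊢
    linarith
  have h2 : q.2 = (muOut μ s).2 := by
    funext t
    apply le_antisymm (hle.2 t)
    have hf := hq.1 s t
    have hqs : q.1 s ≤ 0 := by
      rw [h1]; rw [muOut_fst_self]
    simp only [muOut]
    try dsimp
    linarith
  exact Prod.ext h1 h2

private lemma tight1 {μ : S → S → ℝ} {p : Pt S} (hp : p ∈ TT μ) (t : S) :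
    p.1 t ≤ max (⨆ u, (μ t u - p.2 u)) 0 := by
  classical
  obtain ⟨hpPP, hmin⟩ := hp
  rw [mem_PP] at hpPP
  set m := max (⨆ u, (μ t u - p.2 u)) 0 with hm
  have hq : (Function.update p.1 t (min (p.1 t) m), p.2) ∈ PP μ := by
    rw [mem_PP]
    refine ⟨fun a b => ?_, fun u => ?_, hpPP.2.2⟩
    · by_cases hat : a = t
      · subst hat
        show μ a b ≤ Function.update p.1 a (min (p.1 a) m) a + p.2 b
        rw [Function.update_self]
        have h1 := le_sup' (fun u => μ a u - p.2 u) b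
        try dsimp at h1
        have h2 := hpPP.1 a b
        have h3 : (⨆ u, (μ a u - p.2 u)) ≤ m := le_max_left _ _
        have : μ a b - p.2 b ≤ min (p.1 a) m := le_min (by linarith) (by linarith)
        try dsimp
        linarith
      · show μ a b ≤ Function.update p.1 t (min (p.1 t) m) a + p.2 b
        rw [Function.update_of_ne hat]
        exact hpPP.1 a b
    · show 0 ≤ Function.update p.1 t (min (p.1 t) m) u
      by_cases hut : u = t
      · subst hut
        rw [Function.update_self]
        exact le_min (hpPP.2.1 u) (le_max_right _ _)
      · rw [Function.update_of_ne hut]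
        exact hpPP.2.1 u
  have hle : (Function.update p.1 t (min (p.1 t) m), p.2) ≤ p := by
    refine ⟨?_, le_refl _⟩
    intro u
    show Function.update p.1 t (min (p.1 t) m) u ≤ p.1 u
    by_cases hut : u = t
    · subst hut; rw [Function.update_self]; exact min_le_left _ _
    · rw [Function.update_of_ne hut]
  have heq := hmin _ hq hle
  have h := congrArg (fun r : Pt S => r.1 t) heq
  try dsimp at h
  rw [Function.update_self] at h
  exact min_eq_left_iff.mp h

private lemma tight2 {μ : S → S → ℝ} {p : Pt S} (hp : p ∈ TT μ) (t : S) :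
    p.2 t ≤ max (⨆ u, (μ u t - p.1 u)) 0 := by
  classical
  obtain ⟨hpPP, hmin⟩ := hp
  rw [mem_PP] at hpPP
  set m := max (⨆ u, (μ u t - p.1 u)) 0 with hm
  have hq : (p.1, Function.update p.2 t (min (p.2 t) m)) ∈ PP μ := by
    rw [mem_PP]
    refine ⟨fun a b => ?_, hpPP.2.1, fun u => ?_⟩
    · by_cases hbt : b = t
      · subst hbt
        show μ a b ≤ p.1 a + Function.update p.2 b (min (p.2 b) m) b
        rw [Function.update_self]
        have h1 := le_sup' (fun u => μ u b - p.1 u) a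
        try dsimp at h1
        have h2 := hpPP.1 a b
        have h3 : (⨆ u, (μ u b - p.1 u)) ≤ m := le_max_left _ _
        have : μ a b - p.1 a ≤ min (p.2 b) m := le_min (by linarith) (by linarith)
        try dsimp
        linarith
      · show μ a b ≤ p.1 a + Function.update p.2 t (min (p.2 t) m) b
        rw [Function.update_of_ne hbt]
        exact hpPP.1 a b
    · show 0 ≤ Function.update p.2 t (min (p.2 t) m) u
      by_cases hut : u = t
      · subst hut
        rw [Function.update_self]
        exact le_min (hpPP.2.2 u) (le_max_right _ _)
      · rw [Function.update_of_ne hut]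
        exact hpPP.2.2 u
  have hle : (p.1, Function.update p.2 t (min (p.2 t) m)) ≤ p := by
    refine ⟨le_refl _, ?_⟩
    intro u
    show Function.update p.2 t (min (p.2 t) m) u ≤ p.2 u
    by_cases hut : u = t
    · subst hut; rw [Function.update_self]; exact min_le_left _ _
    · rw [Function.update_of_ne hut]
  have heq := hmin _ hq hle
  have h := congrArg (fun r : Pt S => r.2 t) heq
  try dsimp at h
  rw [Function.update_self] at h
  exact min_eq_left_iff.mp h

private lemma key1 {μ : S → S → ℝ} (hμ : DirDist μ) {p : Pt S} (hp : p ∈ TT μ) (s t : S) :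
    p.1 t - (muOut μ s).1 t ≤ p.1 s := by
  have hPP := hp.1
  rw [mem_PP] at hPP
  have ht := tight1 hp t
  have hout : ∀ u, μ t u - μ s u ≤ (muOut μ s).1 t := fun u =>
    le_sup' (fun u => μ t u - μ s u) u
  rcases le_or_gt (p.1 t) 0 with h0 | h0
  · have h1 := hout s
    have h2 := hμ.2 s
    have h3 := hμ.1 t s
    have h4 := hPP.2.1 s
    linarith
  · have hsup : p.1 t ≤ ⨆ u, (μ t u - p.2 u) := by
      rcases max_choice (⨆ u, (μ t u - p.2 u)) 0 with h | h
      · rw [h] at ht; exact ht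
      · rw [h] at ht; linarith
    obtain ⟨u, hu⟩ := exists_sup_eq (fun u => μ t u - p.2 u)
    try dsimp at hu
    rw [hu] at hsup
    have h1 := hout u
    have h2 := hPP.1 s u
    linarith

private lemma key2 {μ : S → S → ℝ} (hμ : DirDist μ) {p : Pt S} (hp : p ∈ TT μ) (s t : S) :
    p.2 t - (muIn μ s).2 t ≤ p.2 s := by
  have hPP := hp.1
  rw [mem_PP] at hPP
  have ht := tight2 hp t
  have hin : ∀ u, μ u t - μ u s ≤ (muIn μ s).2 t := fun u =>
    le_sup' (fun u => μ u t - μ u s) u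
  rcases le_or_gt (p.2 t) 0 with h0 | h0
  · have h1 := hin s
    have h2 := hμ.2 s
    have h3 := hμ.1 s t
    have h4 := hPP.2.2 s
    linarith
  · have hsup : p.2 t ≤ ⨆ u, (μ u t - p.1 u) := by
      rcases max_choice (⨆ u, (μ u t - p.1 u)) 0 with h | h
      · rw [h] at ht; exact ht
      · rw [h] at ht; linarith
    obtain ⟨u, hu⟩ := exists_sup_eq (fun u => μ u t - p.1 u)
    try dsimp at hu
    rw [hu] at hsup
    have h1 := hin u
    have h2 := hPP.1 u s
    linarith

private lemma Dinf_muOut_eq {μ : S → S → ℝ} (hμ : DirDist μ) {p : Pt S}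
    (hp : p ∈ TT μ) (s : S) : Dinf (muOut μ s) p = p.1 s := by
  have hPP := hp.1
  rw [mem_PP] at hPP
  apply le_antisymm
  · refine Dinf_le (hPP.2.1 s) (fun t => key1 hμ hp s t) (fun t => ?_)
    have := hPP.1 s t
    simp only [muOut]
    try dsimp
    linarith
  · have h := le_Dinf_c (p := muOut μ s) (q := p) s
    have h0 := muOut_fst_self μ s
    linarith

private lemma Dinf_muIn_eq {μ : S → S → ℝ} (hμ : DirDist μ) {p : Pt S}
    (hp : p ∈ TT μ) (s : S) : Dinf p (muIn μ s) = p.2 s := by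
  have hPP := hp.1
  rw [mem_PP] at hPP
  apply le_antisymm
  · refine Dinf_le (hPP.2.2 s) (fun t => ?_) (fun t => key2 hμ hp s t)
    have := hPP.1 t s
    simp only [muIn]
    try dsimp
    linarith
  · have h := le_Dinf_r (p := p) (q := muIn μ s) s
    have h0 := muIn_snd_self μ s
    linarith

end Helpers

/-- Proposition 2.11 (2).  `μ_s^{in}, μ_s^{out} ∈ T_{μ,s}`, and for `p ∈ T_μ`:
`p^c(s) = D_∞(T_{μ,s}, p) = D_∞(μ_s^{out}, p)` and
`p^r(s) = D_∞(p, T_{μ,s}) = D_∞(p, μ_s^{in})`. -/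
theorem stmt8 {S : Type*} [Fintype S] [Nonempty S] (μ : S → S → ℝ)
    (hμ : DirDist μ) :
    (∀ s : S, muIn μ s ∈ Tms μ s ∧ muOut μ s ∈ Tms μ s) ∧
    (∀ p ∈ TT μ, ∀ s : S,
      p.1 s = DinfSet (Tms μ s) {p} ∧ p.1 s = Dinf (muOut μ s) p ∧
      p.2 s = DinfSet {p} (Tms μ s) ∧ p.2 s = Dinf p (muIn μ s)) := by
  constructor
  · intro s
    exact ⟨muIn_mem_Tms hμ s, muOut_mem_Tms hμ s⟩
  · intro p hp s
    have hOut := muOut_mem_Tms hμ s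
    have hIn := muIn_mem_Tms hμ s
    have hEqO := Dinf_muOut_eq hμ hp s
    have hEqI := Dinf_muIn_eq hμ hp s
    refine ⟨?_, hEqO.symm, ?_, hEqI.symm⟩
    · have hmem : p.1 s ∈ Set.image2 Dinf (Tms μ s) {p} := by
        rw [← hEqO]
        exact Set.mem_image2_of_mem hOut rfl
      have hlb : ∀ x ∈ Set.image2 Dinf (Tms μ s) {p}, p.1 s ≤ x := by
        rintro x ⟨q, hq, y, hy, rfl⟩
        obtain rfl : y = p := hy
        have h := le_Dinf_c (p := q) (q := y) s
        have h0 : q.1 s = 0 := hq.2.1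
        linarith
      exact le_antisymm (le_csInf ⟨_, hmem⟩ hlb)
        (csInf_le ⟨p.1 s, fun x hx => hlb x hx⟩ hmem)
    · have hmem : p.2 s ∈ Set.image2 Dinf {p} (Tms μ s) := by
        rw [← hEqI]
        exact Set.mem_image2_of_mem rfl hIn
      have hlb : ∀ x ∈ Set.image2 Dinf {p} (Tms μ s), p.2 s ≤ x := by
        rintro x ⟨y, hy, q, hq, rfl⟩
        obtain rfl : y = p := hy
        have h := le_Dinf_r (p := y) (q := q) s
        have h0 : q.2 s = 0 := hq.2.2
        linarith
      exact le_antisymm (le_csInf ⟨_, hmem⟩ hlb)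
        (csInf_le ⟨p.2 s, fun x hx => hlb x hx⟩ hmem)
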